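/- arXiv:1707.03863 — 6 statements merged into one kernel-verified Lean document; each statement's English description precedes it below -/
import Mathlib

section
/- Presimplicial homotopy is symmetric: if h is a presimplicial homotopy from f to g (presimplicial morphisms ℬ → 𝒞 of simplicial left modules over a simplicial k-algebra 𝒜), then t_i := σ_i^𝒞 ∘ (f_n + g_n) − h_i is a presimplicial homotopy from g to f. -/
open TensorProduct

universe u

/-- A simplicial `k`-algebra: a collection of (commutative) `k`-algebras `A n` together
with face and degeneracy algebra morphisms satisfying the simplicial identities. -/
structure SimplicialAlgebra (k : Type u) [Field k] where
  A : ℕ → Type u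
  ring : ∀ n, CommRing (A n)
  alg : ∀ n, Algebra k (A n)
  δ : ∀ n, ℕ → (A (n + 1) →+* A n)
  σ : ∀ n, ℕ → (A n →+* A (n + 1))
  δ_δ : ∀ n i j, i < j → j ≤ n + 2 → ∀ a,
    δ n i (δ (n + 1) j a) = δ n (j - 1) (δ (n + 1) i a)
  σ_σ : ∀ n i j, i ≤ j → j ≤ n → ∀ a,
    σ (n + 1) i (σ n j a) = σ (n + 1) (j + 1) (σ n i a)
  δ_σ_lt : ∀ n i j, i < j → j ≤ n + 1 → ∀ a,
    δ (n + 1) i (σ (n + 1) j a) = σ n (j - 1) (δ n i a)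
  δ_σ_eq : ∀ n i j, (i = j ∨ i = j + 1) → j ≤ n → ∀ a, δ n i (σ n j a) = a
  δ_σ_gt : ∀ n i j, j + 1 < i → i ≤ n + 2 → ∀ a,
    δ (n + 1) i (σ (n + 1) j a) = σ n j (δ n (i - 1) a)

attribute [instance] SimplicialAlgebra.ring SimplicialAlgebra.alg

variable {k : Type u} [Field k]

/-- A simplicial module over a simplicial `k`-algebra `𝒜`: a simplicial `k`-vector space
`(M n)` with an `A n`-module structure on each `M n`, compatible with the face and
degeneracy maps.  (Since the algebras are commutative, left and right modules agree.) -/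
structure SModule (𝒜 : SimplicialAlgebra k) where
  M : ℕ → Type u
  acg : ∀ n, AddCommGroup (M n)
  modA : ∀ n, Module (𝒜.A n) (M n)
  modk : ∀ n, Module k (M n)
  tower : ∀ n, IsScalarTower k (𝒜.A n) (M n)
  scomm : ∀ n, SMulCommClass (𝒜.A n) k (M n)
  δ : ∀ n, ℕ → (M (n + 1) →ₗ[k] M n)
  σ : ∀ n, ℕ → (M n →ₗ[k] M (n + 1))
  δ_δ : ∀ n i j, i < j → j ≤ n + 2 → ∀ m,
    δ n i (δ (n + 1) j m) = δ n (j - 1) (δ (n + 1) i m)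
  σ_σ : ∀ n i j, i ≤ j → j ≤ n → ∀ m,
    σ (n + 1) i (σ n j m) = σ (n + 1) (j + 1) (σ n i m)
  δ_σ_lt : ∀ n i j, i < j → j ≤ n + 1 → ∀ m,
    δ (n + 1) i (σ (n + 1) j m) = σ n (j - 1) (δ n i m)
  δ_σ_eq : ∀ n i j, (i = j ∨ i = j + 1) → j ≤ n → ∀ m, δ n i (σ n j m) = m
  δ_σ_gt : ∀ n i j, j + 1 < i → i ≤ n + 2 → ∀ m,
    δ (n + 1) i (σ (n + 1) j m) = σ n j (δ n (i - 1) m)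
  δ_smul : ∀ n i (a : 𝒜.A (n + 1)) (m : M (n + 1)), δ n i (a • m) = 𝒜.δ n i a • δ n i m
  σ_smul : ∀ n i (a : 𝒜.A n) (m : M n), σ n i (a • m) = 𝒜.σ n i a • σ n i m

attribute [instance] SModule.acg SModule.modA SModule.modk SModule.tower SModule.scomm

variable {𝒜 : SimplicialAlgebra k}

/-- A presimplicial morphism between simplicial modules over `𝒜`: a family of
`A n`-module maps commuting with the face maps. -/
structure PreMor (B C : SModule 𝒜) where
  f : ∀ n, B.M n →ₗ[𝒜.A n] C.M n
  comm : ∀ n i, i ≤ n + 1 → ∀ b : B.M (n + 1), f n (B.δ n i b) = C.δ n i (f (n + 1) b)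

/-- The identity presimplicial morphism. -/
def PreMor.id (B : SModule 𝒜) : PreMor B B :=
  ⟨fun _ => LinearMap.id, fun _ _ _ _ => rfl⟩

/-- Composition of presimplicial morphisms. -/
def PreMor.comp {B C D : SModule 𝒜} (F : PreMor B C) (G : PreMor C D) : PreMor B D :=
  ⟨fun n => (G.f n).comp (F.f n), fun n i hi b => by
    simp [LinearMap.comp_apply, F.comm n i hi b, G.comm n i hi]⟩

/-- `h` is a presimplicial homotopy between the presimplicial morphisms `F` and `G`. -/
def IsHomotopy {B C : SModule 𝒜} (F G : PreMor B C)
    (h : ∀ n, ℕ → (B.M n →ₗ[k] C.M (n + 1))) : Prop :=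
  (∀ n i, i ≤ n → ∀ (a : 𝒜.A n) (b : B.M n), h n i (a • b) = 𝒜.σ n i a • h n i b) ∧
  (∀ n i j, i < j → j ≤ n + 1 → ∀ b : B.M (n + 1),
    C.δ (n + 1) i (h (n + 1) j b) = h n (j - 1) (B.δ n i b)) ∧
  (∀ n i, 0 < i → i ≤ n → ∀ b : B.M n, C.δ n i (h n i b) = C.δ n i (h n (i - 1) b)) ∧
  (∀ n i j, j + 1 < i → i ≤ n + 2 → ∀ b : B.M (n + 1),
    C.δ (n + 1) i (h (n + 1) j b) = h n j (B.δ n (i - 1) b)) ∧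
  (∀ n (b : B.M n), C.δ n 0 (h n 0 b) = F.f n b) ∧
  (∀ n (b : B.M n), C.δ n (n + 1) (h n n b) = G.f n b)

/-- Symmetry of presimplicial homotopy: if `h` is a presimplicial homotopy from `f` to `g`,
then `t_i := σ_i^𝒞 ∘ (f_n + g_n) - h_i` is a presimplicial homotopy from `g` to `f`. -/
theorem isHomotopy_symm {B C : SModule 𝒜} (F G : PreMor B C)
    (h : ∀ n, ℕ → (B.M n →ₗ[k] C.M (n + 1))) (hh : IsHomotopy F G h) :
    IsHomotopy G F (fun n i =>
      (C.σ n i).comp (((F.f n).restrictScalars k) + ((G.f n).restrictScalars k)) - h n i) := by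
  obtain ⟨h1, h2, h3, h4, h5, h6⟩ := hh
  refine ⟨?_, ?_, ?_, ?_, ?_, ?_⟩
  · intro n i hi a b
    simp only [LinearMap.sub_apply, LinearMap.comp_apply, LinearMap.add_apply,
      LinearMap.coe_restrictScalars, map_smul, map_add, C.σ_smul, h1 n i hi,
      smul_add, smul_sub]
  · intro n i j hij hj b
    simp only [LinearMap.sub_apply, LinearMap.comp_apply, LinearMap.add_apply,
      LinearMap.coe_restrictScalars, map_sub, map_add]
    rw [C.δ_σ_lt n i j hij hj, C.δ_σ_lt n i j hij hj, h2 n i j hij hj,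
      F.comm n i (by omega), G.comm n i (by omega)]
  · intro n i hi0 hi b
    simp only [LinearMap.sub_apply, LinearMap.comp_apply, LinearMap.add_apply,
      LinearMap.coe_restrictScalars, map_sub]
    rw [C.δ_σ_eq n i i (Or.inl rfl) hi, C.δ_σ_eq n i (i - 1) (Or.inr (by omega)) (by omega),
      h3 n i hi0 hi]
  · intro n i j hij hi b
    simp only [LinearMap.sub_apply, LinearMap.comp_apply, LinearMap.add_apply,
      LinearMap.coe_restrictScalars, map_sub, map_add]
    rw [C.δ_σ_gt n i j hij hi, C.δ_σ_gt n i j hij hi, h4 n i j hij hi,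
      F.comm n (i - 1) (by omega), G.comm n (i - 1) (by omega)]
  · intro n b
    simp only [LinearMap.sub_apply, LinearMap.comp_apply, LinearMap.add_apply,
      LinearMap.coe_restrictScalars, map_sub]
    rw [C.δ_σ_eq n 0 0 (Or.inl rfl) (Nat.zero_le n), h5 n b]
    abel
  · intro n b
    simp only [LinearMap.sub_apply, LinearMap.comp_apply, LinearMap.add_apply,
      LinearMap.coe_restrictScalars, map_sub]
    rw [C.δ_σ_eq n (n + 1) n (Or.inr rfl) le_rfl, h6 n b]
    abel
end

section
/- Presimplicial homotopy is transitive: if h is a presimplicial homotopy from f to g and t is a presimplicial homotopy from g to l (all presimplicial morphisms ℬ → 𝒞 of simplicial left modules over a simplicial k-algebra 𝒜), then s_i := h_i + t_i − σ_i^𝒞 ∘ g_n is a presimplicial homotopy from f to l. -/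
open TensorProduct

universe u

variable {k : Type u} [Field k]

variable {𝒜 : SimplicialAlgebra k}

/-- Transitivity of presimplicial homotopy: if `h` is a presimplicial homotopy from `f` to `g`
and `t` is a presimplicial homotopy from `g` to `l`, then `s_i := h_i + t_i - σ_i^𝒞 ∘ g_n`
is a presimplicial homotopy from `f` to `l`. -/
theorem isHomotopy_trans {B C : SModule 𝒜} (F G L : PreMor B C)
    (h t : ∀ n, ℕ → (B.M n →ₗ[k] C.M (n + 1)))
    (hh : IsHomotopy F G h) (ht : IsHomotopy G L t) :
    IsHomotopy F L (fun n i => h n i + t n i - (C.σ n i).comp ((G.f n).restrictScalars k)) := by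
  obtain ⟨hs, hlt, heq, hgt, h0, hn⟩ := hh
  obtain ⟨ts, tlt, teq, tgt, t0, tn⟩ := ht
  refine ⟨?_, ?_, ?_, ?_, ?_, ?_⟩
  · intro n i hi a b
    simp only [LinearMap.sub_apply, LinearMap.add_apply, LinearMap.comp_apply,
      LinearMap.restrictScalars_apply, hs n i hi a b, ts n i hi a b, map_smul,
      C.σ_smul, smul_add, smul_sub]
  · intro n i j hij hj b
    simp only [LinearMap.sub_apply, LinearMap.add_apply, LinearMap.comp_apply,
      LinearMap.restrictScalars_apply, map_sub, map_add,
      hlt n i j hij hj b, tlt n i j hij hj b, C.δ_σ_lt n i j hij hj,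
      G.comm n i (by omega)]
  · intro n i hi hin b
    have e1 : C.δ n i (C.σ n i (G.f n b)) = G.f n b := C.δ_σ_eq n i i (Or.inl rfl) hin _
    have e2 : C.δ n i (C.σ n (i - 1) (G.f n b)) = G.f n b :=
      C.δ_σ_eq n i (i - 1) (Or.inr (by omega)) (by omega) _
    simp only [LinearMap.sub_apply, LinearMap.add_apply, LinearMap.comp_apply,
      LinearMap.restrictScalars_apply, map_sub, map_add,
      heq n i hi hin b, teq n i hi hin b, e1, e2]
  · intro n i j hij hi b
    simp only [LinearMap.sub_apply, LinearMap.add_apply, LinearMap.comp_apply,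
      LinearMap.restrictScalars_apply, map_sub, map_add,
      hgt n i j hij hi b, tgt n i j hij hi b, C.δ_σ_gt n i j hij hi,
      G.comm n (i - 1) (by omega)]
  · intro n b
    have e1 : C.δ n 0 (C.σ n 0 (G.f n b)) = G.f n b := by
      cases n with
      | zero => exact C.δ_σ_eq 0 0 0 (Or.inl rfl) (by omega) _
      | succ m => exact C.δ_σ_eq (m + 1) 0 0 (Or.inl rfl) (by omega) _
    simp only [LinearMap.sub_apply, LinearMap.add_apply, LinearMap.comp_apply,
      LinearMap.restrictScalars_apply, map_sub, map_add, h0 n b, t0 n b, e1]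
    abel
  · intro n b
    have e1 : C.δ n (n + 1) (C.σ n n (G.f n b)) = G.f n b :=
      C.δ_σ_eq n (n + 1) n (Or.inr rfl) le_rfl _
    simp only [LinearMap.sub_apply, LinearMap.add_apply, LinearMap.comp_apply,
      LinearMap.restrictScalars_apply, map_sub, map_add, hn n b, tn n b, e1]
    abel
end

section
/- Presimplicial homotopy defines an equivalence relation on presimplicial morphisms ℬ → 𝒞 between simplicial left modules over a simplicial k-algebra. -/
open TensorProduct

universe u

variable {k : Type u} [Field k]

variable {𝒜 : SimplicialAlgebra k}

namespace HomotopyAux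

variable {B C : SModule 𝒜}

/-- The canonical reflexivity homotopy `σ_i ∘ F`. -/
def reflH (F : PreMor B C) : ∀ n, ℕ → (B.M n →ₗ[k] C.M (n + 1)) :=
  fun n i => (C.σ n i).comp ((F.f n).restrictScalars k)

lemma reflH_apply (F : PreMor B C) (n i : ℕ) (b : B.M n) :
    reflH F n i b = C.σ n i (F.f n b) := rfl

lemma isHomotopy_reflH (F : PreMor B C) : IsHomotopy F F (reflH F) := by
  refine ⟨?_, ?_, ?_, ?_, ?_, ?_⟩
  · intro n i hi a b
    simp only [reflH_apply, map_smul, C.σ_smul]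
  · intro n i j hij hj b
    simp only [reflH_apply, C.δ_σ_lt n i j hij hj,
      F.comm n i (by omega : i ≤ n + 1)]
  · intro n i hi0 hin b
    simp only [reflH_apply, C.δ_σ_eq n i i (Or.inl rfl) hin,
      C.δ_σ_eq n i (i - 1) (Or.inr (by omega)) (by omega)]
  · intro n i j hij hi b
    simp only [reflH_apply, C.δ_σ_gt n i j hij hi,
      F.comm n (i - 1) (by omega : i - 1 ≤ n + 1)]
  · intro n b
    simp only [reflH_apply, C.δ_σ_eq n 0 0 (Or.inl rfl) (Nat.zero_le n)]
  · intro n b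
    simp only [reflH_apply, C.δ_σ_eq n (n + 1) n (Or.inr rfl) le_rfl]

end HomotopyAux

open HomotopyAux in
/-- Presimplicial homotopy defines an equivalence relation on presimplicial morphisms
`ℬ → 𝒞` between simplicial left modules over a simplicial `k`-algebra. -/
theorem isHomotopy_equivalence (B C : SModule 𝒜) :
    Equivalence (fun F G : PreMor B C => ∃ h, IsHomotopy F G h) := by
  constructor
  · exact fun F => ⟨reflH F, isHomotopy_reflH F⟩
  · rintro F G ⟨h, h1, h2, h3, h4, h5, h6⟩
    refine ⟨fun n i => reflH G n i - h n i + reflH F n i, ?_, ?_, ?_, ?_, ?_, ?_⟩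
    · intro n i hi a b
      simp only [LinearMap.add_apply, LinearMap.sub_apply, reflH_apply, map_smul,
        C.σ_smul, h1 n i hi, smul_sub, smul_add]
    · intro n i j hij hj b
      simp only [LinearMap.add_apply, LinearMap.sub_apply, map_add, map_sub, reflH_apply,
        C.δ_σ_lt n i j hij hj, h2 n i j hij hj,
        F.comm n i (by omega : i ≤ n + 1), G.comm n i (by omega : i ≤ n + 1)]
    · intro n i hi0 hin b
      simp only [LinearMap.add_apply, LinearMap.sub_apply, map_add, map_sub, reflH_apply,
        C.δ_σ_eq n i i (Or.inl rfl) hin,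
        C.δ_σ_eq n i (i - 1) (Or.inr (by omega)) (by omega), h3 n i hi0 hin]
    · intro n i j hij hi b
      simp only [LinearMap.add_apply, LinearMap.sub_apply, map_add, map_sub, reflH_apply,
        C.δ_σ_gt n i j hij hi, h4 n i j hij hi,
        F.comm n (i - 1) (by omega : i - 1 ≤ n + 1),
        G.comm n (i - 1) (by omega : i - 1 ≤ n + 1)]
    · intro n b
      simp only [LinearMap.add_apply, LinearMap.sub_apply, map_add, map_sub, reflH_apply,
        C.δ_σ_eq n 0 0 (Or.inl rfl) (Nat.zero_le n), h5 n b]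
      abel
    · intro n b
      simp only [LinearMap.add_apply, LinearMap.sub_apply, map_add, map_sub, reflH_apply,
        C.δ_σ_eq n (n + 1) n (Or.inr rfl) le_rfl, h6 n b]
      abel
  · rintro F G H ⟨h, h1, h2, h3, h4, h5, h6⟩ ⟨h', h1', h2', h3', h4', h5', h6'⟩
    refine ⟨fun n i => h n i - reflH G n i + h' n i, ?_, ?_, ?_, ?_, ?_, ?_⟩
    · intro n i hi a b
      simp only [LinearMap.add_apply, LinearMap.sub_apply, reflH_apply, map_smul,
        C.σ_smul, h1 n i hi, h1' n i hi, smul_sub, smul_add]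
    · intro n i j hij hj b
      simp only [LinearMap.add_apply, LinearMap.sub_apply, map_add, map_sub, reflH_apply,
        C.δ_σ_lt n i j hij hj, h2 n i j hij hj, h2' n i j hij hj,
        G.comm n i (by omega : i ≤ n + 1)]
    · intro n i hi0 hin b
      simp only [LinearMap.add_apply, LinearMap.sub_apply, map_add, map_sub, reflH_apply,
        C.δ_σ_eq n i i (Or.inl rfl) hin,
        C.δ_σ_eq n i (i - 1) (Or.inr (by omega)) (by omega),
        h3 n i hi0 hin, h3' n i hi0 hin]
    · intro n i j hij hi b
      simp only [LinearMap.add_apply, LinearMap.sub_apply, map_add, map_sub, reflH_apply,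
        C.δ_σ_gt n i j hij hi, h4 n i j hij hi, h4' n i j hij hi,
        G.comm n (i - 1) (by omega : i - 1 ≤ n + 1)]
    · intro n b
      simp only [LinearMap.add_apply, LinearMap.sub_apply, map_add, map_sub, reflH_apply,
        C.δ_σ_eq n 0 0 (Or.inl rfl) (Nat.zero_le n), h5 n b, h5' n b]
      abel
    · intro n b
      simp only [LinearMap.add_apply, LinearMap.sub_apply, map_add, map_sub, reflH_apply,
        C.δ_σ_eq n (n + 1) n (Or.inr rfl) le_rfl, h6 n b, h6' n b]
      abel
end

section
/- Let ℳ be a simplicial right module over a simplicial k-algebra 𝒜, and let f : ℬ → 𝒞 be a presimplicial homotopy equivalence of simplicial left 𝒜-modules. Then the induced chain complexes have isomorphic homology: H_•(ℳ ⊗_𝒜 ℬ) ≅ H_•(ℳ ⊗_𝒜 𝒞), where the differential in dimension n is the alternating sum ∑_{i=0}^n (−1)^i D_i of the tensor face maps. -/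
open TensorProduct

universe u

variable {k : Type u} [Field k]

variable {𝒜 : SimplicialAlgebra k}

section Aux

private noncomputable def tliftAux (Mod : SModule 𝒜) {B C : SModule 𝒜} {n m : ℕ}
    (p : Mod.M n →ₗ[k] Mod.M m) (q : B.M n →ₗ[k] C.M m)
    (hc : ∀ (a : 𝒜.A n) (x : Mod.M n) (y : B.M n),
      p (a • x) ⊗ₜ[𝒜.A m] q y = p x ⊗ₜ[𝒜.A m] q (a • y)) :
    TensorProduct (𝒜.A n) (Mod.M n) (B.M n) →+ TensorProduct (𝒜.A m) (Mod.M m) (C.M m) :=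
  TensorProduct.liftAddHom
    { toFun := fun x =>
        { toFun := fun y => p x ⊗ₜ[𝒜.A m] q y
          map_zero' := by show p x ⊗ₜ[𝒜.A m] q 0 = 0; rw [map_zero, TensorProduct.tmul_zero]
          map_add' := fun y z => by
            show p x ⊗ₜ[𝒜.A m] q (y + z) = p x ⊗ₜ[𝒜.A m] q y + p x ⊗ₜ[𝒜.A m] q z
            rw [map_add, TensorProduct.tmul_add] }
      map_zero' := by
        ext y
        show p 0 ⊗ₜ[𝒜.A m] q y = 0
        rw [map_zero, TensorProduct.zero_tmul]
      map_add' := fun x x' => by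
        ext y
        show p (x + x') ⊗ₜ[𝒜.A m] q y = p x ⊗ₜ[𝒜.A m] q y + p x' ⊗ₜ[𝒜.A m] q y
        rw [map_add, TensorProduct.add_tmul] }
    (fun a x y => hc a x y)

private lemma tliftAux_tmul (Mod : SModule 𝒜) {B C : SModule 𝒜} {n m : ℕ}
    (p : Mod.M n →ₗ[k] Mod.M m) (q : B.M n →ₗ[k] C.M m) (hc) (x : Mod.M n) (y : B.M n) :
    tliftAux Mod p q hc (x ⊗ₜ[𝒜.A n] y) = p x ⊗ₜ[𝒜.A m] q y := by
  rw [tliftAux, TensorProduct.liftAddHom_tmul]; rfl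

noncomputable def tlift (Mod : SModule 𝒜) {B C : SModule 𝒜} {n m : ℕ}
    (p : Mod.M n →ₗ[k] Mod.M m) (q : B.M n →ₗ[k] C.M m)
    (hc : ∀ (a : 𝒜.A n) (x : Mod.M n) (y : B.M n),
      p (a • x) ⊗ₜ[𝒜.A m] q y = p x ⊗ₜ[𝒜.A m] q (a • y)) :
    TensorProduct (𝒜.A n) (Mod.M n) (B.M n) →ₗ[k] TensorProduct (𝒜.A m) (Mod.M m) (C.M m) :=
  { toFun := tliftAux Mod p q hc
    map_add' := fun t t' => map_add _ t t'
    map_smul' := fun c t => by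
      show tliftAux Mod p q hc (c • t) = c • tliftAux Mod p q hc t
      induction t using TensorProduct.induction_on with
      | zero => rw [smul_zero, map_zero, smul_zero]
      | tmul x y =>
          rw [TensorProduct.smul_tmul', tliftAux_tmul, tliftAux_tmul, map_smul,
            TensorProduct.smul_tmul']
      | add a b ha hb => rw [smul_add, map_add, ha, hb, map_add, smul_add] }

@[simp] lemma tlift_tmul (Mod : SModule 𝒜) {B C : SModule 𝒜} {n m : ℕ}
    (p : Mod.M n →ₗ[k] Mod.M m) (q : B.M n →ₗ[k] C.M m) (hc) (x : Mod.M n) (y : B.M n) :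
    tlift Mod p q hc (x ⊗ₜ[𝒜.A n] y) = p x ⊗ₜ[𝒜.A m] q y :=
  tliftAux_tmul Mod p q hc x y

lemma text {R M N P : Type u} [CommRing R] [AddCommGroup M] [AddCommGroup N] [AddCommGroup P]
    [Module R M] [Module R N] [Module k M] [SMulCommClass R k M] [Module k P]
    {f g : TensorProduct R M N →ₗ[k] P}
    (h : ∀ x y, f (x ⊗ₜ[R] y) = g (x ⊗ₜ[R] y)) : f = g := by
  ext t
  induction t using TensorProduct.induction_on with
  | zero => simp
  | tmul x y => exact h x y
  | add a b ha hb => rw [map_add, map_add, ha, hb]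

end Aux
/-- The map `m ⊗ b ↦ m ⊗ F b` induced on tensor products by a presimplicial morphism. -/
noncomputable def morT (Md : SModule 𝒜) {B C : SModule 𝒜} (F : PreMor B C) (n : ℕ) :
    TensorProduct (𝒜.A n) (Md.M n) (B.M n) →ₗ[k] TensorProduct (𝒜.A n) (Md.M n) (C.M n) :=
  tlift Md LinearMap.id ((F.f n).restrictScalars k) (fun a x y => by
    show (a • x) ⊗ₜ[𝒜.A n] (F.f n y) = x ⊗ₜ[𝒜.A n] (F.f n (a • y))
    rw [LinearMap.map_smul, TensorProduct.smul_tmul])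

@[simp] lemma morT_tmul (Md : SModule 𝒜) {B C : SModule 𝒜} (F : PreMor B C) (n : ℕ)
    (x : Md.M n) (y : B.M n) :
    morT Md F n (x ⊗ₜ[𝒜.A n] y) = x ⊗ₜ[𝒜.A n] F.f n y :=
  tlift_tmul _ _ _ _ _ _

/-- The map `m ⊗ b ↦ σⱼ m ⊗ hⱼ b` induced on tensor products by a presimplicial homotopy. -/
noncomputable def homT (Md : SModule 𝒜) {B : SModule 𝒜}
    (h : ∀ n, ℕ → (B.M n →ₗ[k] B.M (n + 1)))
    (hsm : ∀ n i, i ≤ n → ∀ (a : 𝒜.A n) (b : B.M n), h n i (a • b) = 𝒜.σ n i a • h n i b)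
    (n j : ℕ) :
    TensorProduct (𝒜.A n) (Md.M n) (B.M n) →ₗ[k]
      TensorProduct (𝒜.A (n + 1)) (Md.M (n + 1)) (B.M (n + 1)) :=
  if hj : j ≤ n then
    tlift Md (Md.σ n j) (h n j) (fun a x y => by
      rw [Md.σ_smul, hsm n j hj, TensorProduct.smul_tmul])
  else 0

lemma homT_tmul (Md : SModule 𝒜) {B : SModule 𝒜}
    (h : ∀ n, ℕ → (B.M n →ₗ[k] B.M (n + 1)))
    (hsm : ∀ n i, i ≤ n → ∀ (a : 𝒜.A n) (b : B.M n), h n i (a • b) = 𝒜.σ n i a • h n i b)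
    {n j : ℕ} (hj : j ≤ n)
    (x : Md.M n) (y : B.M n) :
    homT Md h hsm n j (x ⊗ₜ[𝒜.A n] y) = Md.σ n j x ⊗ₜ[𝒜.A (n + 1)] h n j y := by
  rw [homT, dif_pos hj, tlift_tmul]

/-- The chain homotopy on tensor products. -/
noncomputable def sT (Md : SModule 𝒜) {B : SModule 𝒜}
    (h : ∀ n, ℕ → (B.M n →ₗ[k] B.M (n + 1)))
    (hsm : ∀ n i, i ≤ n → ∀ (a : 𝒜.A n) (b : B.M n), h n i (a • b) = 𝒜.σ n i a • h n i b)
    (n : ℕ) :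
    TensorProduct (𝒜.A n) (Md.M n) (B.M n) →ₗ[k]
      TensorProduct (𝒜.A (n + 1)) (Md.M (n + 1)) (B.M (n + 1)) :=
  ∑ j ∈ Finset.range (n + 1), ((-1 : ℤ) ^ j) • homT Md h hsm n j

/-- `morT` is a chain map. -/
lemma chainmapT (Md : SModule 𝒜) {B C : SModule 𝒜} (F : PreMor B C)
    (DB : ∀ n : ℕ, ℕ → (TensorProduct (𝒜.A (n + 1)) (Md.M (n + 1)) (B.M (n + 1)) →ₗ[k]
        TensorProduct (𝒜.A n) (Md.M n) (B.M n)))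
    (DC : ∀ n : ℕ, ℕ → (TensorProduct (𝒜.A (n + 1)) (Md.M (n + 1)) (C.M (n + 1)) →ₗ[k]
        TensorProduct (𝒜.A n) (Md.M n) (C.M n)))
    (hDB : ∀ n i (m : Md.M (n + 1)) (b : B.M (n + 1)),
      DB n i (m ⊗ₜ[𝒜.A (n + 1)] b) = Md.δ n i m ⊗ₜ[𝒜.A n] B.δ n i b)
    (hDC : ∀ n i (m : Md.M (n + 1)) (c : C.M (n + 1)),
      DC n i (m ⊗ₜ[𝒜.A (n + 1)] c) = Md.δ n i m ⊗ₜ[𝒜.A n] C.δ n i c) (n : ℕ) :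
    (∑ i ∈ Finset.range (n + 2), ((-1 : ℤ) ^ i) • DC n i).comp (morT Md F (n + 1))
      = (morT Md F n).comp (∑ i ∈ Finset.range (n + 2), ((-1 : ℤ) ^ i) • DB n i) := by
  apply text
  intro x y
  rw [LinearMap.comp_apply, LinearMap.comp_apply, morT_tmul, LinearMap.sum_apply,
    LinearMap.sum_apply, map_sum]
  refine Finset.sum_congr rfl (fun i hi => ?_)
  rw [LinearMap.smul_apply, LinearMap.smul_apply, map_zsmul, hDC, hDB, morT_tmul,
    F.comm n i (Nat.lt_succ_iff.mp (Finset.mem_range.mp hi))]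

lemma morT_comp (Md : SModule 𝒜) {B C : SModule 𝒜} (F : PreMor B C) (G : PreMor C B) (n : ℕ) :
    morT Md (F.comp G) n = (morT Md G n).comp (morT Md F n) := by
  apply text
  intro x y
  rw [LinearMap.comp_apply, morT_tmul, morT_tmul, morT_tmul]
  rfl
/-- The purely combinatorial cancellation underlying the simplicial homotopy identity. -/
lemma comb {T : Type u} [AddCommGroup T] (f : ℕ → ℕ → T) (u : ℕ → ℕ → T) (w v : ℕ → T) (n : ℕ)
    (hfu1 : ∀ j ≤ n, ∀ i ≤ j, f i (j + 1) = - u j i)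
    (hfu2 : ∀ j ≤ n + 1, ∀ i, j + 1 ≤ i → i ≤ n + 1 → f (i + 1) j = - u j i)
    (hdiag1 : ∀ j ≤ n + 1, f j j = w j)
    (hdiag2 : ∀ j ≤ n + 1, f (j + 1) j = - v j)
    (hwv : ∀ j ≤ n, w (j + 1) = v j) :
    (∑ i ∈ Finset.range (n + 3), ∑ j ∈ Finset.range (n + 2), f i j)
      + ∑ j ∈ Finset.range (n + 1), ∑ i ∈ Finset.range (n + 2), u j i
      = w 0 - v (n + 1) := by
  have split : ∀ j ∈ Finset.range (n + 2), ∑ i ∈ Finset.range (n + 3), f i j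
      = ((∑ i ∈ Finset.range j, f i j) + f j j)
        + (f (j + 1) j + ∑ i ∈ Finset.Ico (j + 2) (n + 3), f i j) := by
    intro j hj
    have hj' : j < n + 2 := Finset.mem_range.mp hj
    rw [← Finset.sum_range_add_sum_Ico (fun i => f i j) (show j + 1 ≤ n + 3 by omega),
      Finset.sum_range_succ, Finset.sum_eq_sum_Ico_succ_bot (show j + 1 < n + 3 by omega)]
  rw [Finset.sum_comm, Finset.sum_congr rfl split, Finset.sum_add_distrib,
    Finset.sum_add_distrib, Finset.sum_add_distrib]
  have eA : ∑ j ∈ Finset.range (n + 2), ∑ i ∈ Finset.range j, f i j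
      = - ∑ j ∈ Finset.range (n + 1), ∑ i ∈ Finset.range (j + 1), u j i := by
    rw [Finset.sum_range_succ', Finset.range_zero, Finset.sum_empty, add_zero,
      ← Finset.sum_neg_distrib]
    refine Finset.sum_congr rfl (fun j hj => ?_)
    rw [← Finset.sum_neg_distrib]
    refine Finset.sum_congr rfl (fun i hi => ?_)
    exact hfu1 j (Nat.lt_succ_iff.mp (Finset.mem_range.mp hj)) i
      (Nat.lt_succ_iff.mp (Finset.mem_range.mp hi))
  have eD : ∑ j ∈ Finset.range (n + 2), ∑ i ∈ Finset.Ico (j + 2) (n + 3), f i j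
      = - ∑ j ∈ Finset.range (n + 2), ∑ i ∈ Finset.Ico (j + 1) (n + 2), u j i := by
    rw [← Finset.sum_neg_distrib]
    refine Finset.sum_congr rfl (fun j hj => ?_)
    have hj' := Finset.mem_range.mp hj
    have hIco : Finset.Ico (j + 2) (n + 3)
        = (Finset.Ico (j + 1) (n + 2)).map (addRightEmbedding 1) := by
      rw [Finset.map_add_right_Ico]
    rw [hIco, Finset.sum_map, ← Finset.sum_neg_distrib]
    refine Finset.sum_congr rfl (fun i hi => ?_)
    have hi' := Finset.mem_Ico.mp hi
    show f (i + 1) j = - u j i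
    exact hfu2 j (by omega) i hi'.1 (by omega)
  have eBC : (∑ j ∈ Finset.range (n + 2), f j j)
      + ∑ j ∈ Finset.range (n + 2), f (j + 1) j = w 0 - v (n + 1) := by
    have h1 : ∑ j ∈ Finset.range (n + 2), f j j
        = w 0 + ∑ j ∈ Finset.range (n + 1), v j := by
      rw [Finset.sum_range_succ', hdiag1 0 (by omega), add_comm]
      congr 1
      refine Finset.sum_congr rfl (fun j hj => ?_)
      have hj' := Finset.mem_range.mp hj
      rw [hdiag1 (j + 1) (by omega), hwv j (by omega)]
    have h2 : ∑ j ∈ Finset.range (n + 2), f (j + 1) j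
        = - ((∑ j ∈ Finset.range (n + 1), v j) + v (n + 1)) := by
      rw [Finset.sum_range_succ, hdiag2 (n + 1) le_rfl, neg_add]
      congr 1
      rw [← Finset.sum_neg_distrib]
      refine Finset.sum_congr rfl (fun j hj => ?_)
      have hj' := Finset.mem_range.mp hj
      exact hdiag2 j (by omega)
    rw [h1, h2]; abel
  have eu : (∑ j ∈ Finset.range (n + 1), ∑ i ∈ Finset.range (j + 1), u j i)
      + ∑ j ∈ Finset.range (n + 2), ∑ i ∈ Finset.Ico (j + 1) (n + 2), u j i
      = ∑ j ∈ Finset.range (n + 1), ∑ i ∈ Finset.range (n + 2), u j i := by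
    rw [Finset.sum_range_succ (fun j => ∑ i ∈ Finset.Ico (j + 1) (n + 2), u j i),
      Finset.Ico_self, Finset.sum_empty, add_zero, ← Finset.sum_add_distrib]
    refine Finset.sum_congr rfl (fun j hj => ?_)
    have hj' := Finset.mem_range.mp hj
    exact Finset.sum_range_add_sum_Ico (u j) (by omega)
  rw [eA, eD, ← eBC, ← eu]
  abel
lemma homotopy_key0 (Md : SModule 𝒜) {B C : SModule 𝒜} (F : PreMor B C) (G : PreMor C B)
    (h : ∀ n, ℕ → (B.M n →ₗ[k] B.M (n + 1)))
    (hh : IsHomotopy (F.comp G) (PreMor.id B) h)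
    (D : ∀ n : ℕ, ℕ → (TensorProduct (𝒜.A (n + 1)) (Md.M (n + 1)) (B.M (n + 1)) →ₗ[k]
        TensorProduct (𝒜.A n) (Md.M n) (B.M n)))
    (hD : ∀ n i (m : Md.M (n + 1)) (b : B.M (n + 1)),
      D n i (m ⊗ₜ[𝒜.A (n + 1)] b) = Md.δ n i m ⊗ₜ[𝒜.A n] B.δ n i b) :
    (∑ i ∈ Finset.range 2, ((-1 : ℤ) ^ i) • D 0 i).comp (sT Md h hh.1 0)
      = morT Md (F.comp G) 0 - LinearMap.id := by
  apply text
  intro x y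
  rw [LinearMap.comp_apply]
  have e1 : sT Md h hh.1 0 (x ⊗ₜ[𝒜.A 0] y) = Md.σ 0 0 x ⊗ₜ[𝒜.A 1] h 0 0 y := by
    rw [sT, Finset.sum_range_one, pow_zero, one_smul, homT_tmul Md h hh.1 le_rfl]
  rw [e1, LinearMap.sum_apply, Finset.sum_range_succ, Finset.sum_range_one,
    LinearMap.smul_apply, LinearMap.smul_apply, hD, hD, pow_zero, one_smul, pow_one,
    Md.δ_σ_eq 0 0 0 (Or.inl rfl) le_rfl, Md.δ_σ_eq 0 1 0 (Or.inr rfl) le_rfl,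
    hh.2.2.2.2.1 0 y, hh.2.2.2.2.2 0 y, LinearMap.sub_apply, morT_tmul, LinearMap.id_apply,
    neg_smul, one_smul, sub_eq_add_neg]
  rfl

lemma homotopy_key (Md : SModule 𝒜) {B C : SModule 𝒜} (F : PreMor B C) (G : PreMor C B)
    (h : ∀ n, ℕ → (B.M n →ₗ[k] B.M (n + 1)))
    (hh : IsHomotopy (F.comp G) (PreMor.id B) h)
    (D : ∀ n : ℕ, ℕ → (TensorProduct (𝒜.A (n + 1)) (Md.M (n + 1)) (B.M (n + 1)) →ₗ[k]
        TensorProduct (𝒜.A n) (Md.M n) (B.M n)))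
    (hD : ∀ n i (m : Md.M (n + 1)) (b : B.M (n + 1)),
      D n i (m ⊗ₜ[𝒜.A (n + 1)] b) = Md.δ n i m ⊗ₜ[𝒜.A n] B.δ n i b) (n : ℕ) :
    (∑ i ∈ Finset.range (n + 3), ((-1 : ℤ) ^ i) • D (n + 1) i).comp (sT Md h hh.1 (n + 1))
      + (sT Md h hh.1 n).comp (∑ i ∈ Finset.range (n + 2), ((-1 : ℤ) ^ i) • D n i)
      = morT Md (F.comp G) (n + 1) - LinearMap.id := by
  apply text
  intro x y
  have e1 : (∑ i ∈ Finset.range (n + 3), ((-1 : ℤ) ^ i) • D (n + 1) i)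
        ((sT Md h hh.1 (n + 1)) (x ⊗ₜ[𝒜.A (n + 1)] y))
      = ∑ i ∈ Finset.range (n + 3), ∑ j ∈ Finset.range (n + 2),
          ((-1 : ℤ) ^ (i + j)) • (Md.δ (n + 1) i (Md.σ (n + 1) j x)
            ⊗ₜ[𝒜.A (n + 1)] B.δ (n + 1) i (h (n + 1) j y)) := by
    have es : (sT Md h hh.1 (n + 1)) (x ⊗ₜ[𝒜.A (n + 1)] y)
        = ∑ j ∈ Finset.range (n + 2), ((-1 : ℤ) ^ j)
            • (Md.σ (n + 1) j x ⊗ₜ[𝒜.A (n + 2)] h (n + 1) j y) := by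
      rw [sT, LinearMap.sum_apply]
      refine Finset.sum_congr rfl (fun j hj => ?_)
      rw [LinearMap.smul_apply, homT_tmul Md h hh.1 (Nat.lt_succ_iff.mp (Finset.mem_range.mp hj))]
    rw [es, LinearMap.sum_apply]
    refine Finset.sum_congr rfl (fun i hi => ?_)
    rw [LinearMap.smul_apply, map_sum, Finset.smul_sum]
    refine Finset.sum_congr rfl (fun j hj => ?_)
    rw [map_zsmul, hD, smul_smul, ← pow_add]
  have e2 : (sT Md h hh.1 n) ((∑ i ∈ Finset.range (n + 2), ((-1 : ℤ) ^ i) • D n i)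
        (x ⊗ₜ[𝒜.A (n + 1)] y))
      = ∑ j ∈ Finset.range (n + 1), ∑ i ∈ Finset.range (n + 2),
          ((-1 : ℤ) ^ (i + j)) • (Md.σ n j (Md.δ n i x)
            ⊗ₜ[𝒜.A (n + 1)] h n j (B.δ n i y)) := by
    have step : ∀ i ∈ Finset.range (n + 2), sT Md h hh.1 n (((-1 : ℤ) ^ i • D n i)
          (x ⊗ₜ[𝒜.A (n + 1)] y))
        = ∑ j ∈ Finset.range (n + 1), ((-1 : ℤ) ^ (i + j)) • (Md.σ n j (Md.δ n i x)
            ⊗ₜ[𝒜.A (n + 1)] h n j (B.δ n i y)) := by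
      intro i hi
      rw [LinearMap.smul_apply, hD, map_zsmul, sT, LinearMap.sum_apply, Finset.smul_sum]
      refine Finset.sum_congr rfl (fun j hj => ?_)
      rw [LinearMap.smul_apply, homT_tmul Md h hh.1 (Nat.lt_succ_iff.mp (Finset.mem_range.mp hj)),
        smul_smul, ← pow_add]
    rw [LinearMap.sum_apply, map_sum, Finset.sum_congr rfl step, Finset.sum_comm]
  rw [LinearMap.add_apply, LinearMap.comp_apply, LinearMap.comp_apply, e1, e2,
    LinearMap.sub_apply, morT_tmul, LinearMap.id_apply]
  refine comb _ _
    (fun j => x ⊗ₜ[𝒜.A (n + 1)] B.δ (n + 1) j (h (n + 1) j y))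
    (fun j => x ⊗ₜ[𝒜.A (n + 1)] B.δ (n + 1) (j + 1) (h (n + 1) j y)) n ?_ ?_ ?_ ?_ ?_
    |>.trans ?_
  · -- hfu1 : i ≤ j ≤ n : f i (j+1) = - u j i
    intro j hjn i hij
    rw [Md.δ_σ_lt n i (j + 1) (by omega) (by omega),
      hh.2.1 n i (j + 1) (by omega) (by omega)]
    show ((-1 : ℤ) ^ (i + (j + 1))) • _ = _
    rw [show i + (j + 1) = (i + j) + 1 by omega, pow_succ, mul_comm, neg_one_mul, neg_smul]
    rfl
  · -- hfu2 : j + 1 ≤ i ≤ n + 1 : f (i+1) j = - u j i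
    intro j hjn i hji hin
    rw [Md.δ_σ_gt n (i + 1) j (by omega) (by omega), hh.2.2.2.1 n (i + 1) j (by omega) (by omega)]
    show ((-1 : ℤ) ^ (i + 1 + j)) • _ = _
    rw [show i + 1 + j = (i + j) + 1 by omega, pow_succ, mul_comm, neg_one_mul, neg_smul]
    simp only [Nat.add_sub_cancel]
  · -- hdiag1 : f j j = w j
    intro j hj
    rw [Md.δ_σ_eq (n + 1) j j (Or.inl rfl) hj]
    have : Even (j + j) := ⟨j, rfl⟩
    rw [this.neg_one_pow, one_smul]
  · -- hdiag2 : f (j+1) j = - v j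
    intro j hj
    rw [Md.δ_σ_eq (n + 1) (j + 1) j (Or.inr rfl) hj]
    have : Odd (j + 1 + j) := ⟨j, by omega⟩
    rw [this.neg_one_pow, neg_one_smul]
  · -- hwv : w (j+1) = v j
    intro j hj
    show x ⊗ₜ[𝒜.A (n + 1)] B.δ (n + 1) (j + 1) (h (n + 1) (j + 1) y)
      = x ⊗ₜ[𝒜.A (n + 1)] B.δ (n + 1) (j + 1) (h (n + 1) j y)
    rw [hh.2.2.1 (n + 1) (j + 1) (by omega) (by omega), Nat.add_sub_cancel]
  · -- final : w 0 - v (n+1) = x ⊗ (F.comp G).f y - x ⊗ y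
    rw [hh.2.2.2.2.1 (n + 1) y, hh.2.2.2.2.2 (n + 1) y]
    rfl

set_option maxHeartbeats 1000000

/-- If `f : ℬ → 𝒞` is a presimplicial homotopy equivalence of simplicial left `𝒜`-modules
(i.e. it admits `g : 𝒞 → ℬ` with `g ∘ f` presimplicially homotopic to `id_ℬ` and `f ∘ g`
presimplicially homotopic to `id_𝒞`), and `ℳ` is a simplicial right `𝒜`-module, then
the chain complexes `ℳ ⊗_𝒜 ℬ` and `ℳ ⊗_𝒜 𝒞` — whose `n`-th terms are
`M_n ⊗_{A_n} B_n` resp. `M_n ⊗_{A_n} C_n`, with differential the alternating sum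
`∂ = ∑ (-1)^i D_i` of the tensor face maps `D_i(m ⊗ b) = δ_i m ⊗ δ_i b` — have isomorphic
homology in every degree. -/
theorem homology_iso_of_presimplicial_homotopy_equivalence
    (Mod B C : SModule 𝒜) (F : PreMor B C) (G : PreMor C B)
    (hB : ∀ n, ℕ → (B.M n →ₗ[k] B.M (n + 1)))
    (hC : ∀ n, ℕ → (C.M n →ₗ[k] C.M (n + 1)))
    (hhB : IsHomotopy (F.comp G) (PreMor.id B) hB)
    (hhC : IsHomotopy (G.comp F) (PreMor.id C) hC)
    (DB : ∀ n : ℕ, ℕ → (TensorProduct (𝒜.A (n + 1)) (Mod.M (n + 1)) (B.M (n + 1)) →ₗ[k]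
        TensorProduct (𝒜.A n) (Mod.M n) (B.M n)))
    (DC : ∀ n : ℕ, ℕ → (TensorProduct (𝒜.A (n + 1)) (Mod.M (n + 1)) (C.M (n + 1)) →ₗ[k]
        TensorProduct (𝒜.A n) (Mod.M n) (C.M n)))
    (hDB : ∀ n i (m : Mod.M (n + 1)) (b : B.M (n + 1)),
      DB n i (m ⊗ₜ[𝒜.A (n + 1)] b) = Mod.δ n i m ⊗ₜ[𝒜.A n] B.δ n i b)
    (hDC : ∀ n i (m : Mod.M (n + 1)) (c : C.M (n + 1)),
      DC n i (m ⊗ₜ[𝒜.A (n + 1)] c) = Mod.δ n i m ⊗ₜ[𝒜.A n] C.δ n i c) :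
    -- homology in degree 0:
    Nonempty
      ((TensorProduct (𝒜.A 0) (Mod.M 0) (B.M 0) ⧸
          LinearMap.range (∑ i ∈ Finset.range 2, ((-1 : ℤ) ^ i) • DB 0 i)) ≃ₗ[k]
        (TensorProduct (𝒜.A 0) (Mod.M 0) (C.M 0) ⧸
          LinearMap.range (∑ i ∈ Finset.range 2, ((-1 : ℤ) ^ i) • DC 0 i))) ∧
    -- homology in degree n + 1:
    ∀ n : ℕ,
      Nonempty
        ((LinearMap.ker (∑ i ∈ Finset.range (n + 2), ((-1 : ℤ) ^ i) • DB n i) ⧸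
            Submodule.comap
              (LinearMap.ker (∑ i ∈ Finset.range (n + 2), ((-1 : ℤ) ^ i) • DB n i)).subtype
              (LinearMap.range (∑ i ∈ Finset.range (n + 3), ((-1 : ℤ) ^ i) • DB (n + 1) i))) ≃ₗ[k]
          (LinearMap.ker (∑ i ∈ Finset.range (n + 2), ((-1 : ℤ) ^ i) • DC n i) ⧸
            Submodule.comap
              (LinearMap.ker (∑ i ∈ Finset.range (n + 2), ((-1 : ℤ) ^ i) • DC n i)).subtype
              (LinearMap.range (∑ i ∈ Finset.range (n + 3), ((-1 : ℤ) ^ i) • DC (n + 1) i)))) := by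
  have cmF : ∀ n, (∑ i ∈ Finset.range (n + 2), ((-1 : ℤ) ^ i) • DC n i).comp
        (morT Mod F (n + 1))
      = (morT Mod F n).comp (∑ i ∈ Finset.range (n + 2), ((-1 : ℤ) ^ i) • DB n i) :=
    fun n => chainmapT Mod F DB DC hDB hDC n
  have cmG : ∀ n, (∑ i ∈ Finset.range (n + 2), ((-1 : ℤ) ^ i) • DB n i).comp
        (morT Mod G (n + 1))
      = (morT Mod G n).comp (∑ i ∈ Finset.range (n + 2), ((-1 : ℤ) ^ i) • DC n i) :=
    fun n => chainmapT Mod G DC DB hDC hDB n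
  have keyB0 := homotopy_key0 Mod F G hB hhB DB hDB
  have keyB := homotopy_key Mod F G hB hhB DB hDB
  have keyC0 := homotopy_key0 Mod G F hC hhC DC hDC
  have keyC := homotopy_key Mod G F hC hhC DC hDC
  constructor
  · -- degree 0
    have hΦ : LinearMap.range (∑ i ∈ Finset.range 2, ((-1 : ℤ) ^ i) • DB 0 i)
        ≤ Submodule.comap (morT Mod F 0)
            (LinearMap.range (∑ i ∈ Finset.range 2, ((-1 : ℤ) ^ i) • DC 0 i)) := by
      rintro _ ⟨z, rfl⟩
      exact Submodule.mem_comap.mpr ⟨morT Mod F 1 z, LinearMap.congr_fun (cmF 0) z⟩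
    have hΨ : LinearMap.range (∑ i ∈ Finset.range 2, ((-1 : ℤ) ^ i) • DC 0 i)
        ≤ Submodule.comap (morT Mod G 0)
            (LinearMap.range (∑ i ∈ Finset.range 2, ((-1 : ℤ) ^ i) • DB 0 i)) := by
      rintro _ ⟨z, rfl⟩
      exact Submodule.mem_comap.mpr ⟨morT Mod G 1 z, LinearMap.congr_fun (cmG 0) z⟩
    refine ⟨LinearEquiv.ofLinear (Submodule.mapQ _ _ (morT Mod F 0) hΦ)
      (Submodule.mapQ _ _ (morT Mod G 0) hΨ) ?_ ?_⟩
    · refine Submodule.linearMap_qext _ (LinearMap.ext fun z => ?_)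
      rw [LinearMap.comp_apply, LinearMap.comp_apply, LinearMap.comp_apply,
        Submodule.mkQ_apply, Submodule.mapQ_apply, Submodule.mapQ_apply]
      rw [LinearMap.id_apply]
      show Submodule.Quotient.mk (morT Mod F 0 (morT Mod G 0 z)) = Submodule.Quotient.mk z
      rw [Submodule.Quotient.eq]
      have e : morT Mod F 0 (morT Mod G 0 z) - z
          = ((∑ i ∈ Finset.range 2, ((-1 : ℤ) ^ i) • DC 0 i).comp (sT Mod hC hhC.1 0)) z := by
        rw [keyC0, LinearMap.sub_apply, LinearMap.id_apply, morT_comp Mod G F 0,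
          LinearMap.comp_apply]
      rw [e, LinearMap.comp_apply]
      exact ⟨_, rfl⟩
    · refine Submodule.linearMap_qext _ (LinearMap.ext fun z => ?_)
      rw [LinearMap.comp_apply, LinearMap.comp_apply, LinearMap.comp_apply,
        Submodule.mkQ_apply, Submodule.mapQ_apply, Submodule.mapQ_apply]
      rw [LinearMap.id_apply]
      show Submodule.Quotient.mk (morT Mod G 0 (morT Mod F 0 z)) = Submodule.Quotient.mk z
      rw [Submodule.Quotient.eq]
      have e : morT Mod G 0 (morT Mod F 0 z) - z
          = ((∑ i ∈ Finset.range 2, ((-1 : ℤ) ^ i) • DB 0 i).comp (sT Mod hB hhB.1 0)) z := by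
        rw [keyB0, LinearMap.sub_apply, LinearMap.id_apply, morT_comp Mod F G 0,
          LinearMap.comp_apply]
      rw [e, LinearMap.comp_apply]
      exact ⟨_, rfl⟩
  · -- degree n + 1
    intro n
    have hresF : ∀ x ∈ LinearMap.ker (∑ i ∈ Finset.range (n + 2), ((-1 : ℤ) ^ i) • DB n i),
        morT Mod F (n + 1) x
          ∈ LinearMap.ker (∑ i ∈ Finset.range (n + 2), ((-1 : ℤ) ^ i) • DC n i) := by
      intro x hx
      rw [LinearMap.mem_ker] at hx ⊢
      rw [← LinearMap.comp_apply, cmF n, LinearMap.comp_apply, hx, map_zero]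
    have hresG : ∀ x ∈ LinearMap.ker (∑ i ∈ Finset.range (n + 2), ((-1 : ℤ) ^ i) • DC n i),
        morT Mod G (n + 1) x
          ∈ LinearMap.ker (∑ i ∈ Finset.range (n + 2), ((-1 : ℤ) ^ i) • DB n i) := by
      intro x hx
      rw [LinearMap.mem_ker] at hx ⊢
      rw [← LinearMap.comp_apply, cmG n, LinearMap.comp_apply, hx, map_zero]
    have hqF : Submodule.comap
          (LinearMap.ker (∑ i ∈ Finset.range (n + 2), ((-1 : ℤ) ^ i) • DB n i)).subtype
          (LinearMap.range (∑ i ∈ Finset.range (n + 3), ((-1 : ℤ) ^ i) • DB (n + 1) i))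
        ≤ Submodule.comap ((morT Mod F (n + 1)).restrict hresF)
          (Submodule.comap
            (LinearMap.ker (∑ i ∈ Finset.range (n + 2), ((-1 : ℤ) ^ i) • DC n i)).subtype
            (LinearMap.range (∑ i ∈ Finset.range (n + 3), ((-1 : ℤ) ^ i) • DC (n + 1) i))) := by
      intro x hx
      obtain ⟨z, hz⟩ := Submodule.mem_comap.mp hx
      refine Submodule.mem_comap.mpr (Submodule.mem_comap.mpr ⟨morT Mod F (n + 2) z, ?_⟩)
      exact (LinearMap.congr_fun (cmF (n + 1)) z).trans (congrArg (morT Mod F (n + 1)) hz)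
    have hqG : Submodule.comap
          (LinearMap.ker (∑ i ∈ Finset.range (n + 2), ((-1 : ℤ) ^ i) • DC n i)).subtype
          (LinearMap.range (∑ i ∈ Finset.range (n + 3), ((-1 : ℤ) ^ i) • DC (n + 1) i))
        ≤ Submodule.comap ((morT Mod G (n + 1)).restrict hresG)
          (Submodule.comap
            (LinearMap.ker (∑ i ∈ Finset.range (n + 2), ((-1 : ℤ) ^ i) • DB n i)).subtype
            (LinearMap.range (∑ i ∈ Finset.range (n + 3), ((-1 : ℤ) ^ i) • DB (n + 1) i))) := by
      intro x hx
      obtain ⟨z, hz⟩ := Submodule.mem_comap.mp hx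
      refine Submodule.mem_comap.mpr (Submodule.mem_comap.mpr ⟨morT Mod G (n + 2) z, ?_⟩)
      exact (LinearMap.congr_fun (cmG (n + 1)) z).trans (congrArg (morT Mod G (n + 1)) hz)
    refine ⟨LinearEquiv.ofLinear (Submodule.mapQ _ _ ((morT Mod F (n + 1)).restrict hresF) hqF)
      (Submodule.mapQ _ _ ((morT Mod G (n + 1)).restrict hresG) hqG) ?_ ?_⟩
    · refine Submodule.linearMap_qext _ (LinearMap.ext fun x => ?_)
      rw [LinearMap.comp_apply, LinearMap.comp_apply, LinearMap.comp_apply,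
        Submodule.mkQ_apply, Submodule.mapQ_apply, Submodule.mapQ_apply]
      rw [LinearMap.id_apply]
      show Submodule.Quotient.mk ((morT Mod F (n + 1)).restrict hresF
          ((morT Mod G (n + 1)).restrict hresG x)) = Submodule.Quotient.mk x
      rw [Submodule.Quotient.eq]
      have hx0 : (∑ i ∈ Finset.range (n + 2), ((-1 : ℤ) ^ i) • DC n i) ↑x = 0 := x.2
      have hkey := LinearMap.congr_fun (keyC n) (↑x :
        TensorProduct (𝒜.A (n + 1)) (Mod.M (n + 1)) (C.M (n + 1)))
      rw [LinearMap.add_apply, LinearMap.comp_apply, LinearMap.comp_apply,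
        LinearMap.sub_apply, LinearMap.id_apply, hx0, map_zero, add_zero] at hkey
      refine Submodule.mem_comap.mpr ⟨sT Mod hC hhC.1 (n + 1) ↑x, ?_⟩
      rw [Submodule.coe_subtype, hkey]
      push_cast
      rw [LinearMap.restrict_coe_apply, LinearMap.restrict_coe_apply,
        morT_comp Mod G F (n + 1), LinearMap.comp_apply]
    · refine Submodule.linearMap_qext _ (LinearMap.ext fun x => ?_)
      rw [LinearMap.comp_apply, LinearMap.comp_apply, LinearMap.comp_apply,
        Submodule.mkQ_apply, Submodule.mapQ_apply, Submodule.mapQ_apply]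
      rw [LinearMap.id_apply]
      show Submodule.Quotient.mk ((morT Mod G (n + 1)).restrict hresG
          ((morT Mod F (n + 1)).restrict hresF x)) = Submodule.Quotient.mk x
      rw [Submodule.Quotient.eq]
      have hx0 : (∑ i ∈ Finset.range (n + 2), ((-1 : ℤ) ^ i) • DB n i) ↑x = 0 := x.2
      have hkey := LinearMap.congr_fun (keyB n) (↑x :
        TensorProduct (𝒜.A (n + 1)) (Mod.M (n + 1)) (B.M (n + 1)))
      rw [LinearMap.add_apply, LinearMap.comp_apply, LinearMap.comp_apply,
        LinearMap.sub_apply, LinearMap.id_apply, hx0, map_zero, add_zero] at hkey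
      refine Submodule.mem_comap.mpr ⟨sT Mod hB hhB.1 (n + 1) ↑x, ?_⟩
      rw [Submodule.coe_subtype, hkey]
      push_cast
      rw [LinearMap.restrict_coe_apply, LinearMap.restrict_coe_apply,
        morT_comp Mod F G (n + 1), LinearMap.comp_apply]
end

section
/- If two presimplicial morphisms f, g between presimplicial k-modules are presimplicially homotopic via h, then the chain maps they induce on the associated chain complexes (with differential ∂ = ∑ (−1)^i δ_i) are chain homotopic: setting H_n = ∑_{i=0}^n (−1)^i h_i, one has ∂H + H∂ = f − g. -/
theorem presimp_aux (k : Type*) [Field k]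
    (B C : ℕ → Type*) [∀ n, AddCommGroup (B n)] [∀ n, Module k (B n)]
    [∀ n, AddCommGroup (C n)] [∀ n, Module k (C n)]
    (δB : ∀ n, ℕ → (B (n + 1) →ₗ[k] B n)) (δC : ∀ n, ℕ → (C (n + 1) →ₗ[k] C n))
    (f g : ∀ n, B n →ₗ[k] C n)
    (h : ∀ n, ℕ → (B n →ₗ[k] C (n + 1)))
    (h1 : ∀ n i j, i < j → j ≤ n + 1 → ∀ b : B (n + 1),
      δC (n + 1) i (h (n + 1) j b) = h n (j - 1) (δB n i b))
    (h2 : ∀ n i, 0 < i → i ≤ n → ∀ b : B n, δC n i (h n i b) = δC n i (h n (i - 1) b))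
    (h3 : ∀ n i j, j + 1 < i → i ≤ n + 2 → ∀ b : B (n + 1),
      δC (n + 1) i (h (n + 1) j b) = h n j (δB n (i - 1) b))
    (h4 : ∀ n (b : B n), δC n 0 (h n 0 b) = f n b)
    (h5 : ∀ n (b : B n), δC n (n + 1) (h n n b) = g n b)
    (n : ℕ) (b : B (n + 1)) :
    (∑ i ∈ Finset.range (n + 3), ((-1 : ℤ) ^ i) • δC (n + 1) i)
          ((∑ i ∈ Finset.range (n + 2), ((-1 : ℤ) ^ i) • h (n + 1) i) b) +
        (∑ i ∈ Finset.range (n + 1), ((-1 : ℤ) ^ i) • h n i)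
          ((∑ i ∈ Finset.range (n + 2), ((-1 : ℤ) ^ i) • δB n i) b) =
      f (n + 1) b - g (n + 1) b := by
  set T : ℕ × ℕ → C (n + 1) :=
    fun p => ((-1 : ℤ) ^ (p.1 + p.2)) • δC (n + 1) p.1 (h (n + 1) p.2 b) with hT
  set U : ℕ × ℕ → C (n + 1) :=
    fun q => ((-1 : ℤ) ^ (q.1 + q.2)) • h n q.1 (δB n q.2 b) with hU
  set P : Finset (ℕ × ℕ) := Finset.range (n + 3) ×ˢ Finset.range (n + 2) with hP
  set Q : Finset (ℕ × ℕ) := Finset.range (n + 1) ×ˢ Finset.range (n + 2) with hQ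
  have e1 : (∑ i ∈ Finset.range (n + 3), ((-1 : ℤ) ^ i) • δC (n + 1) i)
      ((∑ i ∈ Finset.range (n + 2), ((-1 : ℤ) ^ i) • h (n + 1) i) b) = ∑ p ∈ P, T p := by
    rw [hP, Finset.sum_product]
    simp only [hT, LinearMap.sum_apply, LinearMap.smul_apply, map_sum, map_zsmul,
      Finset.smul_sum, smul_smul, pow_add]
    rw [Finset.sum_comm]
    exact Finset.sum_congr rfl fun i _ => Finset.sum_congr rfl fun j _ => by rw [mul_comm]
  have e2 : (∑ i ∈ Finset.range (n + 1), ((-1 : ℤ) ^ i) • h n i)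
      ((∑ i ∈ Finset.range (n + 2), ((-1 : ℤ) ^ i) • δB n i) b) = ∑ q ∈ Q, U q := by
    rw [hQ, Finset.sum_product]
    simp only [hU, LinearMap.sum_apply, LinearMap.smul_apply, map_sum, map_zsmul,
      Finset.smul_sum, smul_smul, pow_add]
    rw [Finset.sum_comm]
    exact Finset.sum_congr rfl fun i _ => Finset.sum_congr rfl fun j _ => by rw [mul_comm]
  rw [e1, e2]
  rw [← Finset.sum_filter_add_sum_filter_not P (fun p => p.1 < p.2) T]
  rw [← Finset.sum_filter_add_sum_filter_not (P.filter (fun p => ¬ p.1 < p.2))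
    (fun p => p.2 + 1 < p.1) T]
  rw [← Finset.sum_filter_add_sum_filter_not Q (fun q => q.2 ≤ q.1) U]
  have hA : ∑ p ∈ P.filter (fun p => p.1 < p.2), T p
      = - ∑ q ∈ Q.filter (fun q => q.2 ≤ q.1), U q := by
    rw [← Finset.sum_neg_distrib]
    refine Finset.sum_nbij' (fun p => (p.2 - 1, p.1)) (fun q => (q.2, q.1 + 1)) ?_ ?_ ?_ ?_ ?_
    · intro p hp
      simp only [hP, hQ, Finset.mem_filter, Finset.mem_product, Finset.mem_range] at hp ⊢
      omega
    · intro q hq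
      simp only [hP, hQ, Finset.mem_filter, Finset.mem_product, Finset.mem_range] at hq ⊢
      omega
    · intro p hp
      simp only [hP, Finset.mem_filter, Finset.mem_product, Finset.mem_range] at hp
      obtain ⟨a, c⟩ := p
      simp only [Prod.mk.injEq, true_and, and_true]
      omega
    · intro q hq
      simp only [hQ, Finset.mem_filter, Finset.mem_product, Finset.mem_range] at hq
      obtain ⟨a, c⟩ := q
      simp only [Prod.mk.injEq, true_and, and_true]
      omega
    · intro p hp
      simp only [hP, Finset.mem_filter, Finset.mem_product, Finset.mem_range] at hp
      obtain ⟨⟨hp1, hp2⟩, hp3⟩ := hp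
      simp only [hT, hU]
      rw [h1 n p.1 p.2 hp3 (by omega) b]
      rw [show p.1 + p.2 = (p.2 - 1 + p.1) + 1 by omega, pow_succ]
      rw [mul_neg_one, neg_smul]
  have hB : ∑ p ∈ (P.filter (fun p => ¬ p.1 < p.2)).filter (fun p => p.2 + 1 < p.1), T p
      = - ∑ q ∈ Q.filter (fun q => ¬ q.2 ≤ q.1), U q := by
    rw [← Finset.sum_neg_distrib]
    refine Finset.sum_nbij' (fun p => (p.2, p.1 - 1)) (fun q => (q.2 + 1, q.1)) ?_ ?_ ?_ ?_ ?_
    · intro p hp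
      simp only [hP, hQ, Finset.mem_filter, Finset.mem_product, Finset.mem_range] at hp ⊢
      omega
    · intro q hq
      simp only [hP, hQ, Finset.mem_filter, Finset.mem_product, Finset.mem_range] at hq ⊢
      omega
    · intro p hp
      simp only [hP, Finset.mem_filter, Finset.mem_product, Finset.mem_range] at hp
      obtain ⟨a, c⟩ := p
      simp only [Prod.mk.injEq, true_and, and_true]
      omega
    · intro q hq
      simp only [hQ, Finset.mem_filter, Finset.mem_product, Finset.mem_range] at hq
      obtain ⟨a, c⟩ := q
      simp only [Prod.mk.injEq, true_and, and_true]
      omega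
    · intro p hp
      simp only [hP, Finset.mem_filter, Finset.mem_product, Finset.mem_range] at hp
      obtain ⟨⟨⟨hp1, hp2⟩, hp3⟩, hp4⟩ := hp
      simp only [hT, hU]
      rw [h3 n p.1 p.2 hp4 (by omega) b]
      rw [show p.1 + p.2 = (p.2 + (p.1 - 1)) + 1 by omega, pow_succ]
      rw [mul_neg_one, neg_smul]
  have hC : ∑ p ∈ (P.filter (fun p => ¬ p.1 < p.2)).filter (fun p => ¬ p.2 + 1 < p.1), T p
      = f (n + 1) b - g (n + 1) b := by
    have step : ∑ p ∈ (P.filter (fun p => ¬ p.1 < p.2)).filter (fun p => ¬ p.2 + 1 < p.1), T p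
        = ∑ q ∈ Finset.range (n + 2) ×ˢ Finset.range 2, T (q.1 + q.2, q.1) := by
      refine Finset.sum_nbij' (fun p => (p.2, p.1 - p.2)) (fun q => (q.1 + q.2, q.1)) ?_ ?_ ?_ ?_ ?_
      · intro p hp
        simp only [hP, Finset.mem_filter, Finset.mem_product, Finset.mem_range] at hp ⊢
        omega
      · intro q hq
        simp only [hP, Finset.mem_filter, Finset.mem_product, Finset.mem_range] at hq ⊢
        omega
      · intro p hp
        simp only [hP, Finset.mem_filter, Finset.mem_product, Finset.mem_range] at hp
        obtain ⟨a, c⟩ := p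
        simp only [Prod.mk.injEq, true_and, and_true]
        omega
      · intro q hq
        simp only [Finset.mem_product, Finset.mem_range] at hq
        obtain ⟨a, c⟩ := q
        simp only [Prod.mk.injEq, true_and, and_true]
        omega
      · intro p hp
        simp only [hP, Finset.mem_filter, Finset.mem_product, Finset.mem_range] at hp
        obtain ⟨a, c⟩ := p
        have : (c + (a - c), c) = (a, c) := by simp only [Prod.mk.injEq, true_and, and_true]; omega
        rw [this]
    rw [step, Finset.sum_product]
    have step2 : ∀ j ∈ Finset.range (n + 2),
        ∑ y ∈ Finset.range 2, T (j + y, j)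
        = δC (n + 1) j (h (n + 1) j b) - δC (n + 1) (j + 1) (h (n + 1) j b) := by
      intro j hj
      rw [Finset.sum_range_succ, Finset.sum_range_one]
      simp only [hT, add_zero]
      rw [show j + 1 + j = 2 * j + 1 by omega, show j + j = 2 * j by omega]
      rw [pow_succ, pow_mul]
      norm_num
      abel
    rw [Finset.sum_congr rfl step2]
    rw [Finset.sum_sub_distrib,
      Finset.sum_range_succ' (fun j => δC (n + 1) j (h (n + 1) j b)),
      Finset.sum_range_succ (fun j => δC (n + 1) (j + 1) (h (n + 1) j b))]
    have w1 : ∀ j ∈ Finset.range (n + 1),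
        δC (n + 1) (j + 1) (h (n + 1) j b) = δC (n + 1) (j + 1) (h (n + 1) (j + 1) b) := by
      intro j hj
      simp only [Finset.mem_range] at hj
      rw [h2 (n + 1) (j + 1) (by omega) (by omega) b]
      simp
    rw [Finset.sum_congr rfl w1, h4 (n + 1) b, h5 (n + 1) b]
    abel
  rw [hA, hB, hC]
  abel


/-- If two presimplicial morphisms `f, g` between presimplicial `k`-modules are
presimplicially homotopic via `h`, then the induced chain maps on the associated chain
complexes (with differential `∂ = ∑ (-1)^i δ_i`) are chain homotopic: setting
`H_n = ∑_{i=0}^n (-1)^i h_i`, one has `∂H + H∂ = f - g`. -/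
theorem presimplicial_homotopy_gives_chain_homotopy (k : Type*) [Field k]
    (B C : ℕ → Type*) [∀ n, AddCommGroup (B n)] [∀ n, Module k (B n)]
    [∀ n, AddCommGroup (C n)] [∀ n, Module k (C n)]
    (δB : ∀ n, ℕ → (B (n + 1) →ₗ[k] B n)) (δC : ∀ n, ℕ → (C (n + 1) →ₗ[k] C n))
    (hδB : ∀ n i j, i < j → j ≤ n + 2 → ∀ b : B (n + 2),
      δB n i (δB (n + 1) j b) = δB n (j - 1) (δB (n + 1) i b))
    (hδC : ∀ n i j, i < j → j ≤ n + 2 → ∀ c : C (n + 2),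
      δC n i (δC (n + 1) j c) = δC n (j - 1) (δC (n + 1) i c))
    (f g : ∀ n, B n →ₗ[k] C n)
    (hf : ∀ n i, i ≤ n + 1 → ∀ b : B (n + 1), f n (δB n i b) = δC n i (f (n + 1) b))
    (hg : ∀ n i, i ≤ n + 1 → ∀ b : B (n + 1), g n (δB n i b) = δC n i (g (n + 1) b))
    (h : ∀ n, ℕ → (B n →ₗ[k] C (n + 1)))
    (h1 : ∀ n i j, i < j → j ≤ n + 1 → ∀ b : B (n + 1),
      δC (n + 1) i (h (n + 1) j b) = h n (j - 1) (δB n i b))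
    (h2 : ∀ n i, 0 < i → i ≤ n → ∀ b : B n, δC n i (h n i b) = δC n i (h n (i - 1) b))
    (h3 : ∀ n i j, j + 1 < i → i ≤ n + 2 → ∀ b : B (n + 1),
      δC (n + 1) i (h (n + 1) j b) = h n j (δB n (i - 1) b))
    (h4 : ∀ n (b : B n), δC n 0 (h n 0 b) = f n b)
    (h5 : ∀ n (b : B n), δC n (n + 1) (h n n b) = g n b) :
    (∀ n (b : B (n + 1)),
      (∑ i ∈ Finset.range (n + 3), ((-1 : ℤ) ^ i) • δC (n + 1) i)
          ((∑ i ∈ Finset.range (n + 2), ((-1 : ℤ) ^ i) • h (n + 1) i) b) +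
        (∑ i ∈ Finset.range (n + 1), ((-1 : ℤ) ^ i) • h n i)
          ((∑ i ∈ Finset.range (n + 2), ((-1 : ℤ) ^ i) • δB n i) b) =
      f (n + 1) b - g (n + 1) b) ∧
    (∀ b : B 0,
      (∑ i ∈ Finset.range 2, ((-1 : ℤ) ^ i) • δC 0 i) (h 0 0 b) = f 0 b - g 0 b) := by
  constructor
  · intro n b
    exact presimp_aux k B C δB δC f g h h1 h2 h3 h4 h5 n b
  · intro b
    simp only [Finset.sum_range_succ, Finset.sum_range_zero, zero_add, pow_zero, pow_one,
      one_smul, LinearMap.add_apply, LinearMap.smul_apply, h4 0 b, neg_smul, one_smul]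
    have := h5 0 b
    norm_num at this
    rw [LinearMap.neg_apply, this]
    abel
end

section
/- Let A be a commutative k-algebra. The augmented simplicial k-module ℬ^d(A) with B_n = A^{⊗C(n+d+1,d)} (indexed by weakly increasing d-tuples in {0,...,n+1}), augmentation μ : B_0 → A given by multiplication, and face maps δ_i that multiply entries whose s-th indices are i and i+1 (agreeing elsewhere), is acyclic as a chain complex of k-vector spaces: the extra degeneracy σ_{−1} : B_n → B_{n+1}, sending the entry at position (j_1,...,j_d) to position (j_1+1,...,j_d+1) and placing 1 in every position (0, k_2, ..., k_d), provides a contracting homotopy. -/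
/-
The face maps `δ_i`, the extra degeneracy `σ_{-1}` and the augmentation all act on pure tensors
in the same way: push the tensor factors forward along a map of index sets, multiplying the
factors over each fibre (an empty fibre contributes `1`). Such maps compose by composing the
index maps, so `δ₀ σ_{-1} = id`, `δ_{i+1} σ_{-1} = σ_{-1} δ_i`, and in degree `0` the identity
`δ₁ σ_{-1} = (1 ⊗ ⋯ ⊗ μ(-) ⊗ ⋯ ⊗ 1)`, reduce to identities between `collapse` and `shift`. The
first two make `σ_{-1}` a contracting homotopy `∂ σ + σ ∂ = id` of the alternating face map
complex in positive degrees; the third gives exactness at `B_0`.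
-/

open TensorProduct PiTensorProduct

/-- The index set of the bar-like resolution `ℬ^d(A)` in simplicial degree `n`:
weakly increasing `d`-tuples with entries in `{0, 1, …, n + 1}`. -/
def BarIdx (d n : ℕ) := {j : Fin d → Fin (n + 2) // Monotone j}

instance (d n : ℕ) : DecidablePred fun j : Fin d → Fin (n + 2) => Monotone j :=
  fun j => decidable_of_iff (∀ a b, a ≤ b → j a ≤ j b)
    ⟨fun H a b hab => H a b hab, fun H a b hab => H hab⟩

instance (d n : ℕ) : Fintype (BarIdx d n) := Subtype.fintype _

instance (d n : ℕ) : DecidableEq (BarIdx d n) := Subtype.instDecidableEq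

/-- The collapse of indices underlying the face map `δ_i^ℬ` (for `i ∈ {0, …, n + 1}`):
it identifies the values `i` and `i + 1` in each coordinate. -/
def BarIdx.collapse {d n : ℕ} (i : Fin (n + 2)) (J : BarIdx d (n + 1)) : BarIdx d n :=
  ⟨fun s => i.predAbove (J.1 s), fun a b hab => Fin.predAbove_right_monotone i (J.2 hab)⟩

/-- The shift of indices underlying the extra degeneracy `σ_{-1}`: it sends the position
`(j₁, …, j_d)` to the position `(j₁ + 1, …, j_d + 1)`. -/
def BarIdx.shift {d n : ℕ} (J : BarIdx d n) : BarIdx d (n + 1) :=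
  ⟨fun s => (J.1 s).succ, fun a b hab => Fin.succ_le_succ_iff.mpr (J.2 hab)⟩

namespace PiTensorProduct

variable {k A : Type*} [CommSemiring k] [CommSemiring A] [Algebra k A]
  {ι κ ν : Type*} [Fintype ι] [DecidableEq κ]

def IsFiberwiseMul (F : (⨂[k] _ : ι, A) →ₗ[k] ⨂[k] _ : κ, A) (f : ι → κ) : Prop :=
  ∀ a : ι → A, F (tprod k a) = tprod k fun K => ∏ J ∈ Finset.univ.filter (f · = K), a J

theorem isFiberwiseMul_id [Fintype κ] :
    IsFiberwiseMul (LinearMap.id : (⨂[k] _ : κ, A) →ₗ[k] _) id := by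
  intro a
  simp [Finset.filter_eq']

def tprodUpdateOne (c : κ) : A →ₗ[k] ⨂[k] _ : κ, A :=
  (tprod k).toLinearMap (fun _ : κ => (1 : A)) c

theorem tprodUpdateOne_apply (c : κ) (a : A) :
    tprodUpdateOne (k := k) c a = tprod k (Function.update (fun _ => 1) c a) := rfl

namespace IsFiberwiseMul

variable {F F' : (⨂[k] _ : ι, A) →ₗ[k] ⨂[k] _ : κ, A} {f : ι → κ}

theorem ext (hF : IsFiberwiseMul F f) (hF' : IsFiberwiseMul F' f) : F = F' :=
  PiTensorProduct.ext <| MultilinearMap.ext fun a => by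
    simp only [LinearMap.compMultilinearMap_apply, hF a, hF' a]

theorem comp [Fintype κ] [DecidableEq ν] {G : (⨂[k] _ : κ, A) →ₗ[k] ⨂[k] _ : ν, A} {g : κ → ν}
    (hF : IsFiberwiseMul F f) (hG : IsFiberwiseMul G g) : IsFiberwiseMul (G ∘ₗ F) (g ∘ f) := by
  intro a
  rw [LinearMap.comp_apply, hF a, hG]
  congr 1
  funext L
  rw [Finset.prod_fiberwise_eq_prod_filter]
  simp only [Finset.mem_filter, Finset.mem_univ, true_and, Function.comp_apply]

theorem eq_tprodUpdateOne_comp_of_const {c : κ} (hF : IsFiberwiseMul F fun _ => c)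
    {μ : (⨂[k] _ : ι, A) →ₗ[k] A} (hμ : ∀ a, μ (tprod k a) = ∏ J, a J) :
    F = tprodUpdateOne c ∘ₗ μ :=
  PiTensorProduct.ext <| MultilinearMap.ext fun a => by
    simp only [LinearMap.compMultilinearMap_apply, LinearMap.comp_apply, hF a, hμ,
      tprodUpdateOne_apply]
    congr 1
    funext K
    by_cases hK : c = K
    · subst hK; simp
    · simp [hK, Ne.symm hK]

end IsFiberwiseMul

end PiTensorProduct

namespace BarIdx

variable {d : ℕ}

theorem collapse_zero_comp_shift {n : ℕ} :
    collapse 0 ∘ shift = (id : BarIdx d n → BarIdx d n) :=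
  funext fun _ => Subtype.ext <| funext fun _ => by simp [collapse, shift]

theorem collapse_succ_comp_shift {n : ℕ} (i : Fin (n + 2)) :
    collapse (d := d) i.succ ∘ shift = shift ∘ collapse i :=
  funext fun _ => Subtype.ext <| funext fun _ => by simp [collapse, shift, Fin.succ_predAbove_succ]

theorem collapse_one_comp_shift :
    collapse (d := d) (n := 0) 1 ∘ shift = fun _ => ⟨fun _ => 1, monotone_const⟩ :=
  funext fun J => Subtype.ext <| funext fun s => by
    have h : ∀ x : Fin 2, (1 : Fin 2).predAbove x.succ = 1 := by decide
    exact h (J.1 s)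

end BarIdx

theorem alternatingFaceSum_comp_add_comp_alternatingFaceSum {R : Type*} [Semiring R]
    {M : ℕ → Type*} [∀ n, AddCommGroup (M n)] [∀ n, Module R (M n)]
    (δ : ∀ n, Fin (n + 2) → M (n + 1) →ₗ[R] M n) (s : ∀ n, M n →ₗ[R] M (n + 1)) (n : ℕ)
    (h_zero : ∀ x, δ (n + 1) 0 (s (n + 1) x) = x)
    (h_succ : ∀ i x, δ (n + 1) i.succ (s (n + 1) x) = s n (δ n i x)) (x : M (n + 1)) :
    (∑ i : Fin (n + 3), ((-1 : ℤ) ^ (i : ℕ)) • δ (n + 1) i) (s (n + 1) x) +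
      s n ((∑ i : Fin (n + 2), ((-1 : ℤ) ^ (i : ℕ)) • δ n i) x) = x := by
  simp only [LinearMap.sum_apply, LinearMap.smul_apply]
  rw [Fin.sum_univ_succ]
  simp only [Fin.val_zero, pow_zero, one_smul, h_zero, Fin.val_succ, pow_succ, mul_neg_one,
    neg_smul, h_succ, map_sum, map_zsmul, Finset.sum_neg_distrib]
  abel

theorem bar_resolution_acyclic_general (k A : Type) [Field k] [CommRing A] [Algebra k A]
    (d : ℕ)
    (δ : ∀ n, ∀ _ : Fin (n + 2), (⨂[k] (_ : BarIdx d (n + 1)), A) →ₗ[k]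
      (⨂[k] (_ : BarIdx d n), A))
    (hδ : ∀ n (i : Fin (n + 2)) (a : BarIdx d (n + 1) → A),
      δ n i (tprod k a) = tprod k fun K : BarIdx d n =>
        ∏ J ∈ Finset.univ.filter fun J : BarIdx d (n + 1) => BarIdx.collapse i J = K, a J)
    (σm : ∀ n, (⨂[k] (_ : BarIdx d n), A) →ₗ[k] (⨂[k] (_ : BarIdx d (n + 1)), A))
    (hσm : ∀ n (a : BarIdx d n → A),
      σm n (tprod k a) = tprod k fun K : BarIdx d (n + 1) =>
        ∏ J ∈ Finset.univ.filter fun J : BarIdx d n => BarIdx.shift J = K, a J)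
    (μ : (⨂[k] (_ : BarIdx d 0), A) →ₗ[k] A)
    (hμ : ∀ a : BarIdx d 0 → A, μ (tprod k a) = ∏ J, a J) :
    -- `σ_{-1}` is a contracting homotopy for the augmented complex:
    (∀ (n : ℕ) (x : ⨂[k] (_ : BarIdx d n), A), δ n 0 (σm n x) = x) ∧
    (∀ (n : ℕ) (i : Fin (n + 2)) (x : ⨂[k] (_ : BarIdx d (n + 1)), A),
      δ (n + 1) i.succ (σm (n + 1) x) = σm n (δ n i x)) ∧
    -- hence the augmented chain complex (with differential `∑ (-1)^i δ_i`) is acyclic: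
    Function.Surjective μ ∧
    (∀ x : ⨂[k] (_ : BarIdx d 0), A, μ x = 0 →
      ∃ y : ⨂[k] (_ : BarIdx d 1), A,
        (∑ i : Fin 2, ((-1 : ℤ) ^ (i : ℕ)) • δ 0 i) y = x) ∧
    (∀ (n : ℕ) (x : ⨂[k] (_ : BarIdx d (n + 1)), A),
      (∑ i : Fin (n + 2), ((-1 : ℤ) ^ (i : ℕ)) • δ n i) x = 0 →
      ∃ y : ⨂[k] (_ : BarIdx d (n + 2)), A,
        (∑ i : Fin (n + 3), ((-1 : ℤ) ^ (i : ℕ)) • δ (n + 1) i) y = x) := by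
  have hδ' : ∀ n i, IsFiberwiseMul (δ n i) (BarIdx.collapse i) := hδ
  have hσ' : ∀ n, IsFiberwiseMul (σm n) BarIdx.shift := hσm
  have h_zero n x : δ n 0 (σm n x) = x := by
    have h := (hσ' n).comp (hδ' n 0)
    rw [BarIdx.collapse_zero_comp_shift] at h
    exact LinearMap.congr_fun (h.ext isFiberwiseMul_id) x
  have h_succ n i x : δ (n + 1) i.succ (σm (n + 1) x) = σm n (δ n i x) := by
    have h := (hσ' (n + 1)).comp (hδ' (n + 1) i.succ)
    rw [BarIdx.collapse_succ_comp_shift] at h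
    exact LinearMap.congr_fun (h.ext ((hδ' n i).comp (hσ' n))) x
  let one : BarIdx d 0 := ⟨fun _ => 1, monotone_const⟩
  have h_last : δ 0 1 ∘ₗ σm 0 = tprodUpdateOne one ∘ₗ μ := by
    have h := (hσ' 0).comp (hδ' 0 1)
    rw [BarIdx.collapse_one_comp_shift] at h
    exact h.eq_tprodUpdateOne_comp_of_const hμ
  refine ⟨h_zero, h_succ, fun a => ⟨tprodUpdateOne one a, ?_⟩,
    fun x hx => ⟨σm 0 x, ?_⟩, fun n x hx => ⟨σm (n + 1) x, ?_⟩⟩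
  · simp [tprodUpdateOne_apply, hμ, Function.update_apply]
  · have h : δ 0 1 (σm 0 x) = 0 := by simpa [hx] using LinearMap.congr_fun h_last x
    simp [Fin.sum_univ_two, h_zero, h]
  · have h := alternatingFaceSum_comp_add_comp_alternatingFaceSum δ σm n (h_zero _) (h_succ n) x
    rwa [hx, map_zero, add_zero] at h

/-- The augmented simplicial `k`-module `ℬ^d(A)`, with `B_n = A^{⊗ C(n+d+1, d)}` indexed by
weakly increasing `d`-tuples in `{0, …, n + 1}`, augmentation `μ : B_0 → A` given by
multiplication, face maps `δ_i` multiplying the entries whose `s`-th indices are `i` and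
`i + 1` (and agreeing elsewhere), is acyclic as a chain complex of `k`-vector spaces:
the extra degeneracy `σ_{-1} : B_n → B_{n+1}` — sending the entry at position
`(j₁, …, j_d)` to position `(j₁ + 1, …, j_d + 1)` and placing `1` in every position
`(0, k₂, …, k_d)` — provides a contracting homotopy. -/
theorem bar_resolution_acyclic (k A : Type) [Field k] [CommRing A] [Algebra k A]
    (d : ℕ) (hd : 1 ≤ d)
    (δ : ∀ n, ∀ _ : Fin (n + 2), (⨂[k] (_ : BarIdx d (n + 1)), A) →ₗ[k]
      (⨂[k] (_ : BarIdx d n), A))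
    (hδ : ∀ n (i : Fin (n + 2)) (a : BarIdx d (n + 1) → A),
      δ n i (tprod k a) = tprod k fun K : BarIdx d n =>
        ∏ J ∈ Finset.univ.filter fun J : BarIdx d (n + 1) => BarIdx.collapse i J = K, a J)
    (σm : ∀ n, (⨂[k] (_ : BarIdx d n), A) →ₗ[k] (⨂[k] (_ : BarIdx d (n + 1)), A))
    (hσm : ∀ n (a : BarIdx d n → A),
      σm n (tprod k a) = tprod k fun K : BarIdx d (n + 1) =>
        ∏ J ∈ Finset.univ.filter fun J : BarIdx d n => BarIdx.shift J = K, a J)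
    (μ : (⨂[k] (_ : BarIdx d 0), A) →ₗ[k] A)
    (hμ : ∀ a : BarIdx d 0 → A, μ (tprod k a) = ∏ J, a J) :
    -- `σ_{-1}` is a contracting homotopy for the augmented complex:
    (∀ (n : ℕ) (x : ⨂[k] (_ : BarIdx d n), A), δ n 0 (σm n x) = x) ∧
    (∀ (n : ℕ) (i : Fin (n + 2)) (x : ⨂[k] (_ : BarIdx d (n + 1)), A),
      δ (n + 1) i.succ (σm (n + 1) x) = σm n (δ n i x)) ∧
    -- hence the augmented chain complex (with differential `∑ (-1)^i δ_i`) is acyclic: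
    Function.Surjective μ ∧
    (∀ x : ⨂[k] (_ : BarIdx d 0), A, μ x = 0 →
      ∃ y : ⨂[k] (_ : BarIdx d 1), A,
        (∑ i : Fin 2, ((-1 : ℤ) ^ (i : ℕ)) • δ 0 i) y = x) ∧
    (∀ (n : ℕ) (x : ⨂[k] (_ : BarIdx d (n + 1)), A),
      (∑ i : Fin (n + 2), ((-1 : ℤ) ^ (i : ℕ)) • δ n i) x = 0 →
      ∃ y : ⨂[k] (_ : BarIdx d (n + 2)), A,
        (∑ i : Fin (n + 3), ((-1 : ℤ) ^ (i : ℕ)) • δ (n + 1) i) y = x) :=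
  bar_resolution_acyclic_general k A d δ hδ σm hσm μ hμ
end
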